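/- Let g11, g12, g21, g22 > 0, P1, P2 > 0, and α1, α2 ∈ (0, π/2). For any feasible beamforming configuration (angles β_{jk} ∈ [0, π/2] and powers P_{jk} ≥ 0 with P11 + P21 ≤ P1 and P12 + P22 ≤ P2), there exists another feasible configuration with P11' + P21' = P1 and P12' + P22' = P2 whose rates satisfy R1' ≥ R1 and R2' ≥ R2, where the rates are given by R_k = log2(1 + (g_{k1}·cos²(β_{k1} − α1)·P_{k1} + g_{k2}·cos²(β_{k2} − α2)·P_{k2})/(1 + g_{k1}·cos²(β_{j1})·P_{j1} + g_{k2}·cos²(β_{j2})·P_{j2})) for k = 1, 2 and j ≠ k. In particular, every boundary point of the beamforming rate region is achieved with full power at both base stations. -/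

import Mathlib

/-!
At each base station one mobile's channel points along angle `0` and the other's along
`α ∈ (0, π/2)`; all spare power goes to the beam aimed at the latter. Viewing that beam as the
vector `√P (cos β, sin β)` of the closed first quadrant, keep its first coordinate, whose square
is the interference it causes at the other mobile, and lengthen its second coordinate until the
norm is the full budget: the projection onto `(cos α, sin α)`, whose square is the useful signal,
can only grow. Since each rate increases with its signals and decreases with its interferences,
neither rate drops.
-/

/-- Rate of mobile 1 under cooperative beamforming, parameterized by
beam angles `β jk` and powers `P jk`. -/
noncomputable def bfRate1 (g11 g12 α1 α2 β11 β21 β12 β22 P11 P21 P12 P22 : ℝ) : ℝ :=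
  Real.logb 2 (1 +
    (g11 * Real.cos (β11 - α1) ^ 2 * P11 + g12 * Real.cos (β12 - α2) ^ 2 * P12) /
    (1 + g11 * Real.cos β21 ^ 2 * P21 + g12 * Real.cos β22 ^ 2 * P22))

/-- Rate of mobile 2 under cooperative beamforming. -/
noncomputable def bfRate2 (g21 g22 α1 α2 β11 β21 β12 β22 P11 P21 P12 P22 : ℝ) : ℝ :=
  Real.logb 2 (1 +
    (g21 * Real.cos (β21 - α1) ^ 2 * P21 + g22 * Real.cos (β22 - α2) ^ 2 * P22) /
    (1 + g21 * Real.cos β11 ^ 2 * P11 + g22 * Real.cos β12 ^ 2 * P12))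

open Real Set

lemma exists_angle_mem_Icc_mul_cos_eq {x y r : ℝ} (hx : 0 ≤ x) (hr : 0 ≤ r)
    (h : x ^ 2 + y ^ 2 ≤ r ^ 2) :
    ∃ θ ∈ Icc 0 (π / 2), r * cos θ = x ∧ y ≤ r * sin θ := by
  set z : ℂ := ⟨x, √(r ^ 2 - x ^ 2)⟩
  have hz : ‖z‖ = r := by
    rw [Complex.norm_def, Complex.normSq_mk, ← sq, ← sq, sq_sqrt (by nlinarith),
      add_sub_cancel, sqrt_sq hr]
  refine ⟨Complex.arg z, ⟨Complex.arg_nonneg_iff.2 (sqrt_nonneg _),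
    Complex.arg_le_pi_div_two_iff.2 (Or.inl hx)⟩, ?_, ?_⟩
  · rw [← hz, Complex.norm_mul_cos_arg]
  · rw [← hz, Complex.norm_mul_sin_arg]
    exact le_sqrt_of_sq_le (by linarith)

lemma exists_beam_angle {α β P P' : ℝ} (hα : α ∈ Icc 0 (π / 2)) (hβ : β ∈ Icc 0 (π / 2))
    (hP : 0 ≤ P) (hPP' : P ≤ P') :
    ∃ β' ∈ Icc 0 (π / 2), cos β' ^ 2 * P' = cos β ^ 2 * P ∧
      cos (β - α) ^ 2 * P ≤ cos (β' - α) ^ 2 * P' := by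
  have hcos {t : ℝ} (ht : t ∈ Icc 0 (π / 2)) : 0 ≤ cos t :=
    cos_nonneg_of_mem_Icc ⟨by linarith [ht.1, pi_pos], ht.2⟩
  have hsin {t : ℝ} (ht : t ∈ Icc 0 (π / 2)) : 0 ≤ sin t :=
    sin_nonneg_of_nonneg_of_le_pi ht.1 (by linarith [ht.2, pi_pos])
  obtain ⟨β', hβ', hre, him⟩ := exists_angle_mem_Icc_mul_cos_eq (y := √P * sin β)
    (mul_nonneg (sqrt_nonneg P) (hcos hβ))
    (sqrt_nonneg P') (by nlinarith [sin_sq_add_cos_sq β, sq_sqrt hP, sq_sqrt (hP.trans hPP')])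
  have hamp : √P * cos (β - α) ≤ √P' * cos (β' - α) := by
    rw [cos_sub, cos_sub]
    linear_combination - cos α * hre + mul_le_mul_of_nonneg_right him (hsin hα)
  have hamp0 : 0 ≤ √P * cos (β - α) := mul_nonneg (sqrt_nonneg P)
    (cos_nonneg_of_mem_Icc ⟨by linarith [hα.2, hβ.1], by linarith [hα.1, hβ.2]⟩)
  refine ⟨β', hβ', ?_, ?_⟩
  · have hre2 := congrArg (· ^ 2) hre
    simp only [mul_pow, sq_sqrt hP, sq_sqrt (hP.trans hPP')] at hre2
    linarith
  · have hamp2 := pow_le_pow_left₀ hamp0 hamp 2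
    rwa [mul_pow, mul_pow, sq_sqrt hP, sq_sqrt (hP.trans hPP'), mul_comm, mul_comm P'] at hamp2

lemma logb_one_add_div_le_logb_one_add_div {b N N' D D' : ℝ} (hb : 1 < b) (hN : 0 ≤ N)
    (hNN' : N ≤ N') (hD' : 1 ≤ D') (hD'D : D' ≤ D) :
    logb b (1 + N / D) ≤ logb b (1 + N' / D') := by
  have hND : N / D ≤ N' / D' := div_le_div₀ (hN.trans hNN') hNN' (by linarith) hD'D
  have : 0 ≤ N / D := div_nonneg hN (by linarith)
  exact logb_le_logb_of_le hb (by linarith) (by linarith)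

lemma bfRate2_eq_bfRate1 (g21 g22 α1 α2 β11 β21 β12 β22 P11 P21 P12 P22 : ℝ) :
    bfRate2 g21 g22 α1 α2 β11 β21 β12 β22 P11 P21 P12 P22 =
      bfRate1 g21 g22 α1 α2 β21 β11 β22 β12 P21 P11 P22 P12 := rfl

lemma bfRate1_le_bfRate1 {g11 g12 α1 α2 β11 β21 β12 β22 P11 P21 P12 P22
      β11' β21' β12' β22' P11' P21' P12' P22' : ℝ}
    (hg11 : 0 ≤ g11) (hg12 : 0 ≤ g12) (hP11 : 0 ≤ P11) (hP12 : 0 ≤ P12)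
    (hP21' : 0 ≤ P21') (hP22' : 0 ≤ P22')
    (hS1 : cos (β11 - α1) ^ 2 * P11 ≤ cos (β11' - α1) ^ 2 * P11')
    (hS2 : cos (β12 - α2) ^ 2 * P12 ≤ cos (β12' - α2) ^ 2 * P12')
    (hI1 : cos β21' ^ 2 * P21' ≤ cos β21 ^ 2 * P21)
    (hI2 : cos β22' ^ 2 * P22' ≤ cos β22 ^ 2 * P22) :
    bfRate1 g11 g12 α1 α2 β11 β21 β12 β22 P11 P21 P12 P22 ≤
      bfRate1 g11 g12 α1 α2 β11' β21' β12' β22' P11' P21' P12' P22' := by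
  refine logb_one_add_div_le_logb_one_add_div one_lt_two (by positivity) ?_ ?_ ?_
  · nlinarith [mul_le_mul_of_nonneg_left hS1 hg11, mul_le_mul_of_nonneg_left hS2 hg12]
  · have : 0 ≤ g11 * cos β21' ^ 2 * P21' + g12 * cos β22' ^ 2 * P22' := by positivity
    linarith
  · nlinarith [mul_le_mul_of_nonneg_left hI1 hg11, mul_le_mul_of_nonneg_left hI2 hg12]

theorem beamforming_full_power_dominates_general
    (g11 g12 g21 g22 P1 P2 α1 α2 : ℝ)
    (hg11 : 0 < g11) (hg12 : 0 < g12) (hg21 : 0 < g21) (hg22 : 0 < g22)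
    (hα1 : α1 ∈ Set.Ioo 0 (Real.pi / 2)) (hα2 : α2 ∈ Set.Ioo 0 (Real.pi / 2))
    (β11 β21 β12 β22 : ℝ)
    (hβ11 : β11 ∈ Set.Icc 0 (Real.pi / 2)) (hβ21 : β21 ∈ Set.Icc 0 (Real.pi / 2))
    (hβ12 : β12 ∈ Set.Icc 0 (Real.pi / 2)) (hβ22 : β22 ∈ Set.Icc 0 (Real.pi / 2))
    (P11 P21 P12 P22 : ℝ)
    (hP11 : 0 ≤ P11) (hP21 : 0 ≤ P21) (hP12 : 0 ≤ P12) (hP22 : 0 ≤ P22)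
    (hbudget1 : P11 + P21 ≤ P1) (hbudget2 : P12 + P22 ≤ P2) :
    ∃ β11' β21' β12' β22' P11' P21' P12' P22' : ℝ,
      β11' ∈ Set.Icc 0 (Real.pi / 2) ∧ β21' ∈ Set.Icc 0 (Real.pi / 2) ∧
      β12' ∈ Set.Icc 0 (Real.pi / 2) ∧ β22' ∈ Set.Icc 0 (Real.pi / 2) ∧
      0 ≤ P11' ∧ 0 ≤ P21' ∧ 0 ≤ P12' ∧ 0 ≤ P22' ∧
      P11' + P21' = P1 ∧ P12' + P22' = P2 ∧
      bfRate1 g11 g12 α1 α2 β11 β21 β12 β22 P11 P21 P12 P22 ≤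
        bfRate1 g11 g12 α1 α2 β11' β21' β12' β22' P11' P21' P12' P22' ∧
      bfRate2 g21 g22 α1 α2 β11 β21 β12 β22 P11 P21 P12 P22 ≤
        bfRate2 g21 g22 α1 α2 β11' β21' β12' β22' P11' P21' P12' P22' := by
  have hP21' : P21 ≤ P1 - P11 := by linarith
  have hP12' : P12 ≤ P2 - P22 := by linarith
  obtain ⟨β21', hβ21', hI21, hS21⟩ :=
    exists_beam_angle (Ioo_subset_Icc_self hα1) hβ21 hP21 hP21'
  obtain ⟨β12', hβ12', hI12, hS12⟩ :=
    exists_beam_angle (Ioo_subset_Icc_self hα2) hβ12 hP12 hP12'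
  refine ⟨β11, β21', β12', β22, P11, P1 - P11, P2 - P22, P22, hβ11, hβ21', hβ12', hβ22,
    hP11, hP21.trans hP21', hP12.trans hP12', hP22, by ring, by ring, ?_, ?_⟩
  · exact bfRate1_le_bfRate1 hg11.le hg12.le hP11 hP12 (hP21.trans hP21') hP22
      le_rfl hS12 hI21.le le_rfl
  · simp only [bfRate2_eq_bfRate1]
    exact bfRate1_le_bfRate1 hg21.le hg22.le hP21 hP22 hP11 (hP12.trans hP12')
      hS21 le_rfl le_rfl hI12.le

theorem beamforming_full_power_dominates
    (g11 g12 g21 g22 P1 P2 α1 α2 : ℝ)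
    (hg11 : 0 < g11) (hg12 : 0 < g12) (hg21 : 0 < g21) (hg22 : 0 < g22)
    (hP1 : 0 < P1) (hP2 : 0 < P2)
    (hα1 : α1 ∈ Set.Ioo 0 (Real.pi / 2)) (hα2 : α2 ∈ Set.Ioo 0 (Real.pi / 2))
    (β11 β21 β12 β22 : ℝ)
    (hβ11 : β11 ∈ Set.Icc 0 (Real.pi / 2)) (hβ21 : β21 ∈ Set.Icc 0 (Real.pi / 2))
    (hβ12 : β12 ∈ Set.Icc 0 (Real.pi / 2)) (hβ22 : β22 ∈ Set.Icc 0 (Real.pi / 2))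
    (P11 P21 P12 P22 : ℝ)
    (hP11 : 0 ≤ P11) (hP21 : 0 ≤ P21) (hP12 : 0 ≤ P12) (hP22 : 0 ≤ P22)
    (hbudget1 : P11 + P21 ≤ P1) (hbudget2 : P12 + P22 ≤ P2) :
    ∃ β11' β21' β12' β22' P11' P21' P12' P22' : ℝ,
      β11' ∈ Set.Icc 0 (Real.pi / 2) ∧ β21' ∈ Set.Icc 0 (Real.pi / 2) ∧
      β12' ∈ Set.Icc 0 (Real.pi / 2) ∧ β22' ∈ Set.Icc 0 (Real.pi / 2) ∧
      0 ≤ P11' ∧ 0 ≤ P21' ∧ 0 ≤ P12' ∧ 0 ≤ P22' ∧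
      P11' + P21' = P1 ∧ P12' + P22' = P2 ∧
      bfRate1 g11 g12 α1 α2 β11 β21 β12 β22 P11 P21 P12 P22 ≤
        bfRate1 g11 g12 α1 α2 β11' β21' β12' β22' P11' P21' P12' P22' ∧
      bfRate2 g21 g22 α1 α2 β11 β21 β12 β22 P11 P21 P12 P22 ≤
        bfRate2 g21 g22 α1 α2 β11' β21' β12' β22' P11' P21' P12' P22' :=
  beamforming_full_power_dominates_general g11 g12 g21 g22 P1 P2 α1 α2 hg11 hg12 hg21 hg22 hα1 hα2
    β11 β21 β12 β22 hβ11 hβ21 hβ12 hβ22 P11 P21 P12 P22 hP11 hP21 hP12 hP22 hbudget1 hbudget2
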